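/- Let X act transitively on a finite set Ω, B a finite perfect centerless group, Y = X ⋉ B^Ω, and M < Y proper maximal clean with π(M) = X. If M ∩ B^Ω ≠ (e) and T := pr_ω(M ∩ B^Ω) is a proper subgroup of B for all ω ∈ Ω, then up to conjugating M one may assume pr_ω(M ∩ B^Ω) = T for all ω, and then M = N_Y(T^Ω) and [Y : M] ≥ [B : T]^{|Ω|}. -/

import Mathlib

open SemidirectProduct

variable (X : Type*) [Group X] (Ω : Type*) (B : Type*) [MulAction X Ω] [Group B]

/-- The action of `X` on `B^Ω` permuting the coordinates. -/
def permAut : X →* MulAut (Ω → B) where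
  toFun x :=
    { toFun := fun f ω => f (x⁻¹ • ω)
      invFun := fun f ω => f (x • ω)
      left_inv := fun f => by ext ω; simp
      right_inv := fun f => by ext ω; simp
      map_mul' := fun f g => rfl }
  map_one' := by ext f ω; simp
  map_mul' := fun x y => by ext f ω; simp [mul_smul]

open Pointwise

/-!
Write `K = M ∩ B^Ω` and `T_ω = pr_ω K`. Conjugation by `m ∈ M` maps `K` onto itself and
`T_{m.right⁻¹ • ω}` onto `T_ω` up to conjugation by `m.left ω`; since `M` maps onto the
transitive group `X`, all `T_ω` are conjugate to `T = T_{ω₀}`, and conjugating `M` by a suitable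
element of the base `B^Ω` makes them all equal to `T`. Then `M` normalizes `T^Ω`, and this
normalizer is proper: otherwise `T^Ω ⊴ Y`, so `T ⊴ B`, and maximality of `M` leaves either
`T^Ω ≤ M`, against cleanness, or `M T^Ω = Y`, which forces `T = B`. Hence `M = N_Y(T^Ω)`, so
`M ∩ B^Ω = T^Ω`, and as `M` maps onto `X`, `[Y : M] = [B^Ω : T^Ω] = [B : T]^{|Ω|}`.
-/

theorem Subgroup.relIndex_eq_index_of_sup_eq_top {G : Type*} [Group G] {H N : Subgroup G}
    [N.Normal] (h : H ⊔ N = ⊤) : H.relIndex N = H.index := by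
  have : MulAction.IsPretransitive N (G ⧸ H) := by
    refine MulAction.IsPretransitive.of_orbit (x₀ := ((1 : G) : G ⧸ H)) fun a => ?_
    induction a using QuotientGroup.induction_on with | H g => ?_
    have hg : g ∈ ((N ⊔ H : Subgroup G) : Set G) := by rw [sup_comm, h]; trivial
    rw [normal_mul] at hg
    obtain ⟨n, hn, k, hk, rfl⟩ := hg
    refine ⟨⟨n, hn⟩, ?_⟩
    change ((n * 1 : G) : G ⧸ H) = ((n * k : G) : G ⧸ H)
    rw [QuotientGroup.eq]
    simpa using hk
  have hstab : MulAction.stabilizer N ((1 : G) : G ⧸ H) = H.subgroupOf N := by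
    ext n
    change ((n * 1 : G) : G ⧸ H) = ((1 : G) : G ⧸ H) ↔ _
    rw [mul_one, QuotientGroup.eq, mem_subgroupOf, mul_one, inv_mem_iff]
  rw [relIndex, ← hstab, MulAction.index_stabilizer_of_transitive]
  rfl

theorem SemidirectProduct.index_comap_inl_of_map_rightHom_eq_top {N G : Type*} [Group N]
    [Group G] {φ : G →* MulAut N} {H : Subgroup (N ⋊[φ] G)} (h : H.map rightHom = ⊤) :
    (H.comap inl).index = H.index := by
  rw [Subgroup.index_comap, range_inl_eq_ker_rightHom]
  apply Subgroup.relIndex_eq_index_of_sup_eq_top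
  rw [← Subgroup.comap_map_eq, h, Subgroup.comap_top]

theorem Subgroup.le_normalizer_of_conj_smul_le {G : Type*} [Group G] {H P : Subgroup G}
    (h : ∀ g ∈ H, MulAut.conj g • P ≤ P) : H ≤ normalizer (P : Set G) := by
  intro g hg
  rw [mem_normalizer_iff_map_conj_eq]
  refine le_antisymm (h g hg) ?_
  change P ≤ MulAut.conj g • P
  rw [subset_pointwise_smul_iff, ← map_inv]
  exact h g⁻¹ (inv_mem hg)

section

variable {X Ω B}

local notation "Y" => (Ω → B) ⋊[permAut X Ω B] X

@[simp] lemma permAut_apply (x : X) (f : Ω → B) (ω : Ω) :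
    permAut X Ω B x f ω = f (x⁻¹ • ω) := rfl

def baseConj (m : Y) : (Ω → B) →* (Ω → B) where
  toFun f ω := m.left ω * f (m.right⁻¹ • ω) * (m.left ω)⁻¹
  map_one' := by ext; simp
  map_mul' f g := by ext; simp [mul_assoc]

lemma inl_baseConj (m : Y) (f : Ω → B) : inl (baseConj m f) = m * inl f * m⁻¹ := by
  ext ω <;> simp [baseConj, mul_assoc]

lemma baseConj_baseConj_inv (m : Y) (f : Ω → B) : baseConj m (baseConj m⁻¹ f) = f :=
  inl_injective <| by rw [inl_baseConj, inl_baseConj]; group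

lemma baseConj_inv_baseConj (m : Y) (f : Ω → B) : baseConj m⁻¹ (baseConj m f) = f :=
  inl_injective <| by rw [inl_baseConj, inl_baseConj]; group

lemma comap_inl_conj_smul (m : Y) (H : Subgroup Y) :
    (MulAut.conj m • H).comap inl = (H.comap inl).map (baseConj m) := by
  ext f
  have hconj : m⁻¹ * inl f * m = inl (baseConj m⁻¹ f) := by rw [inl_baseConj, inv_inv]
  rw [Subgroup.mem_comap, Subgroup.mem_pointwise_smul_iff_inv_smul_mem, ← map_inv,
    MulAut.smul_def, MulAut.conj_apply, inv_inv, hconj]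
  constructor
  · exact fun hf => ⟨_, hf, baseConj_baseConj_inv m f⟩
  · rintro ⟨g, hg, rfl⟩
    rwa [baseConj_inv_baseConj]

def baseProj (H : Subgroup Y) (ω : Ω) : Subgroup B :=
  (H.comap inl).map (Pi.evalMonoidHom (fun _ => B) ω)

lemma baseProj_conj_smul (m : Y) (H : Subgroup Y) (ω : Ω) :
    baseProj (MulAut.conj m • H) ω =
      MulAut.conj (m.left ω) • baseProj H (m.right⁻¹ • ω) := by
  rw [baseProj, comap_inl_conj_smul, Subgroup.map_map, baseProj]
  change _ = Subgroup.map (MulAut.conj (m.left ω)).toMonoidHom _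
  rw [Subgroup.map_map]
  rfl

lemma baseProj_eq_conj_smul_of_mem {m : Y} {H : Subgroup Y} (hm : m ∈ H) (ω : Ω) :
    baseProj H ω = MulAut.conj (m.left ω) • baseProj H (m.right⁻¹ • ω) := by
  rw [← baseProj_conj_smul, Subgroup.conj_smul_eq_self_of_mem hm]

lemma comap_inl_le_pi_baseProj (H : Subgroup Y) :
    H.comap inl ≤ Subgroup.pi Set.univ (baseProj H) :=
  fun f hf _ _ => ⟨f, hf, rfl⟩

lemma exists_baseProj_eq_conj_smul [MulAction.IsPretransitive X Ω] {H : Subgroup Y}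
    (hH : H.map rightHom = ⊤) (ω₀ ω : Ω) :
    ∃ b : B, baseProj H ω = MulAut.conj b • baseProj H ω₀ := by
  obtain ⟨x, rfl⟩ := MulAction.exists_smul_eq X ω₀ ω
  obtain ⟨m, hm, hmx⟩ : x ∈ H.map rightHom := hH ▸ Subgroup.mem_top x
  refine ⟨m.left (x • ω₀), ?_⟩
  rw [baseProj_eq_conj_smul_of_mem hm, ← hmx, rightHom_eq_right, inv_smul_smul]

lemma exists_baseProj_conj_smul_inl_eq [MulAction.IsPretransitive X Ω] {H : Subgroup Y}
    (hH : H.map rightHom = ⊤) (ω₀ : Ω) :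
    ∃ c : Ω → B, ∀ ω, baseProj (MulAut.conj (inl c : Y) • H) ω = baseProj H ω₀ := by
  choose b hb using exists_baseProj_eq_conj_smul hH ω₀
  refine ⟨fun ω : Ω => (b ω)⁻¹, fun ω => ?_⟩
  rw [baseProj_conj_smul, left_inl, right_inl, inv_one, one_smul, hb, map_inv, inv_smul_smul]

lemma comap_inl_eq_bot_of_baseProj_eq_bot [MulAction.IsPretransitive X Ω] {H : Subgroup Y}
    (hH : H.map rightHom = ⊤) {ω₀ : Ω} (h : baseProj H ω₀ = ⊥) : H.comap inl = ⊥ := by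
  have hproj : Subgroup.pi Set.univ (baseProj H) = ⊥ := by
    refine (Subgroup.pi_eq_bot_iff _).2 fun ω => ?_
    obtain ⟨b, hb⟩ := exists_baseProj_eq_conj_smul hH ω₀ ω
    rw [hb, h, Subgroup.smul_bot]
  exact eq_bot_iff.2 (hproj ▸ comap_inl_le_pi_baseProj H)

lemma map_rightHom_conj_smul_inl (c : Ω → B) (H : Subgroup Y) :
    (MulAut.conj (inl c : Y) • H).map rightHom = H.map rightHom := by
  change (H.map (MulAut.conj (inl c : Y)).toMonoidHom).map rightHom = _
  rw [Subgroup.map_map]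
  congr 1
  ext m
  simp

def basePi (T : Subgroup B) : Subgroup Y :=
  (Subgroup.pi Set.univ fun _ : Ω => T).map inl

lemma conj_smul_basePi_le {H : Subgroup Y} {T : Subgroup B} (hproj : ∀ ω, baseProj H ω = T)
    {m : Y} (hm : m ∈ H) : MulAut.conj m • (basePi T : Subgroup Y) ≤ basePi T := by
  rintro _ ⟨_, ⟨f, hf, rfl⟩, rfl⟩
  refine ⟨baseConj m f, fun ω _ => ?_, inl_baseConj m f⟩
  rw [← hproj ω, baseProj_eq_conj_smul_of_mem hm, hproj]
  exact Subgroup.smul_mem_pointwise_smul _ _ _ (hf _ trivial)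

lemma le_normalizer_basePi {H : Subgroup Y} {T : Subgroup B} (hproj : ∀ ω, baseProj H ω = T) :
    H ≤ Subgroup.normalizer ((basePi T : Subgroup Y) : Set Y) :=
  Subgroup.le_normalizer_of_conj_smul_le fun _ hm => conj_smul_basePi_le hproj hm

lemma basePi_normal {N : Subgroup B} (hN : N.Normal) : (basePi N : Subgroup Y).Normal :=
  ⟨fun _ ⟨f, hf, hfn⟩ m => hfn ▸
    ⟨baseConj m f, fun _ _ => hN.conj_mem _ (hf _ trivial) _, inl_baseConj m f⟩⟩

lemma normal_of_normal_basePi [Nonempty Ω] {T : Subgroup B}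
    (h : (basePi T : Subgroup Y).Normal) : T.Normal := by
  obtain ⟨ω₀⟩ := ‹Nonempty Ω›
  refine ⟨fun t ht b => ?_⟩
  obtain ⟨f, hf, hfeq⟩ :=
    h.conj_mem (inl fun _ => t) ⟨_, fun _ _ => ht, rfl⟩ (inl fun _ => b)
  rw [← map_inv, ← map_mul, ← map_mul] at hfeq
  simpa [inl_injective hfeq] using hf ω₀ trivial

def IsClean (H : Subgroup Y) : Prop :=
  ∀ N : Subgroup B, N.Normal → (basePi N : Subgroup Y) ≤ H → N = ⊥

lemma IsClean.conj_smul {H : Subgroup Y} (hH : IsClean H) (g : Y) :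
    IsClean (MulAut.conj g • H) := fun N hN hle => hH N hN <| by
  have := basePi_normal (Ω := Ω) (X := X) hN
  rwa [← Subgroup.Normal.conj_smul_eq_self g (basePi N),
    Subgroup.pointwise_smul_le_pointwise_smul_iff] at hle

lemma eq_top_of_sup_basePi_eq_top [Nonempty Ω] {H : Subgroup Y} {T : Subgroup B}
    (hproj : ∀ ω, baseProj H ω = T) (hsup : H ⊔ (basePi T : Subgroup Y) = ⊤) : T = ⊤ := by
  obtain ⟨ω₀⟩ := ‹Nonempty Ω›
  refine eq_top_iff.2 fun b _ => ?_
  have hb : (inl fun _ => b : Y) ∈ ((H ⊔ basePi T : Subgroup Y) : Set Y) := by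
    rw [hsup]; trivial
  rw [Subgroup.coe_mul_of_left_le_normalizer_right _ _ (le_normalizer_basePi hproj)] at hb
  obtain ⟨m, hm, _, ⟨f, hf, rfl⟩, hmf⟩ := hb
  have hm' : (fun _ => b) * f⁻¹ ∈ H.comap inl := by
    rw [Subgroup.mem_comap, map_mul, map_inv, ← hmf, mul_inv_cancel_right]
    exact hm
  have hbf : b * (f ω₀)⁻¹ ∈ T := hproj ω₀ ▸ ⟨_, hm', rfl⟩
  simpa using mul_mem hbf (hf ω₀ trivial)

lemma normalizer_basePi_ne_top [Nonempty Ω] {H : Subgroup Y} (hH : IsCoatom H)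
    (hclean : IsClean H) {T : Subgroup B} (hproj : ∀ ω, baseProj H ω = T) (hbot : T ≠ ⊥)
    (htop : T ≠ ⊤) : Subgroup.normalizer ((basePi T : Subgroup Y) : Set Y) ≠ ⊤ := by
  intro hN
  have hnormal : (basePi T : Subgroup Y).Normal := Subgroup.normalizer_eq_top_iff.mp hN
  by_cases hle : (basePi T : Subgroup Y) ≤ H
  · exact hbot (hclean T (normal_of_normal_basePi hnormal) hle)
  · exact htop (eq_top_of_sup_basePi_eq_top hproj
      (codisjoint_iff.mp (hH.not_le_iff_codisjoint.mp hle)))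

lemma comap_inl_eq_pi {H : Subgroup Y} {T : Subgroup B} (hproj : ∀ ω, baseProj H ω = T)
    (hle : (basePi T : Subgroup Y) ≤ H) : H.comap inl = Subgroup.pi Set.univ fun _ => T := by
  refine le_antisymm ?_ ?_
  · simpa only [funext hproj] using comap_inl_le_pi_baseProj H
  · exact (Subgroup.comap_map_eq_self_of_injective inl_injective _).ge.trans
      (Subgroup.comap_mono hle)

lemma index_eq_index_pow [Fintype Ω] {H : Subgroup Y} {T : Subgroup B}
    (hH : H.map rightHom = ⊤) (hproj : ∀ ω, baseProj H ω = T)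
    (hle : (basePi T : Subgroup Y) ≤ H) : H.index = T.index ^ Fintype.card Ω := by
  rw [← index_comap_inl_of_map_rightHom_eq_top hH, comap_inl_eq_pi hproj hle, Subgroup.index_pi,
    Finset.prod_const, Finset.card_univ]

end

theorem clean_maximal_proper_proj
    [Fintype Ω] [Nonempty Ω] [MulAction.IsPretransitive X Ω]
    (M : Subgroup ((Ω → B) ⋊[permAut X Ω B] X))
    (hM : IsCoatom M)
    (hclean : ∀ N : Subgroup B, N.Normal →
      Subgroup.map (inl : (Ω → B) →* _) (Subgroup.pi Set.univ fun _ : Ω => N) ≤ M →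
      N = ⊥)
    (hsurj : M.map (rightHom : _ →* X) = ⊤)
    (hMB : Subgroup.comap (inl : (Ω → B) →* _) M ≠ ⊥)
    (hproj : ∀ ω : Ω, Subgroup.map (Pi.evalMonoidHom (fun _ : Ω => B) ω)
      (Subgroup.comap (inl : (Ω → B) →* _) M) ≠ ⊤) :
    ∃ (y : (Ω → B) ⋊[permAut X Ω B] X) (T : Subgroup B), T ≠ ⊥ ∧ T ≠ ⊤ ∧
      (∀ ω : Ω, Subgroup.map (Pi.evalMonoidHom (fun _ : Ω => B) ω)
        (Subgroup.comap (inl : (Ω → B) →* _)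
          (Subgroup.map (MulAut.conj y).toMonoidHom M)) = T) ∧
      Subgroup.map (MulAut.conj y).toMonoidHom M =
        Subgroup.normalizer ((Subgroup.map (inl : (Ω → B) →* _)
          (Subgroup.pi Set.univ fun _ : Ω => T) : Subgroup ((Ω → B) ⋊[permAut X Ω B] X)) :
            Set ((Ω → B) ⋊[permAut X Ω B] X)) ∧
      T.index ^ (Fintype.card Ω) ≤ M.index := by
  obtain ⟨ω₀⟩ := ‹Nonempty Ω›
  obtain ⟨c, hc⟩ := exists_baseProj_conj_smul_inl_eq hsurj ω₀
  set y : (Ω → B) ⋊[permAut X Ω B] X := inl c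
  set T := baseProj M ω₀
  have hbot : T ≠ ⊥ := fun hT => hMB (comap_inl_eq_bot_of_baseProj_eq_bot hsurj hT)
  have hcoatom : IsCoatom (MulAut.conj y • M) :=
    (OrderIso.isCoatom_iff (MulEquiv.mapSubgroup (MulAut.conj y)) M).2 hM
  have heq :=
    ((hcoatom.le_iff_eq (normalizer_basePi_ne_top hcoatom (IsClean.conj_smul hclean y) hc hbot
      (hproj ω₀))).1 (le_normalizer_basePi hc)).symm
  have hindex : (MulAut.conj y • M).index = T.index ^ Fintype.card Ω :=
    index_eq_index_pow ((map_rightHom_conj_smul_inl c M).trans hsurj) hc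
      (heq ▸ Subgroup.le_normalizer)
  refine ⟨y, T, hbot, hproj ω₀, hc, heq, ?_⟩
  rw [← hindex]
  exact (M.index_map_equiv (MulAut.conj y)).le
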